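/- arXiv:1906.04776 — 4 statements merged into one kernel-verified Lean document; each statement's English description precedes it below -/
import Mathlib

section
/- Assume that every class size N_s is a positive even integer. Then the covariance matrix of the cross-count vector Ā := (a_{st})_{1≤s<t≤K} ∈ ℝ^{K(K−1)/2} under the uniform labeling distribution is invertible (equivalently, positive definite). -/
open Finset Filter MeasureTheory ProbabilityTheory Topology

namespace Crossmatch

/-- First endpoint (index `2j`, i.e., the paper's `2j-1` in 1-based indexing) of the `j`-th
matched pair in the fixed perfect matching on `{1, …, 2I}`. -/
def ep1 {I : ℕ} (j : Fin I) : Fin (2 * I) := ⟨2 * j.val, by have := j.isLt; omega⟩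

/-- Second endpoint (index `2j+1`, i.e., the paper's `2j`) of the `j`-th matched pair. -/
def ep2 {I : ℕ} (j : Fin I) : Fin (2 * I) := ⟨2 * j.val + 1, by have := j.isLt; omega⟩

/-- The set of labelings `L : {1,…,2I} → {1,…,K}` assigning label `s` to exactly `Nc s`
indices, for every `s`. -/
def labelings (I K : ℕ) (Nc : Fin K → ℕ) : Finset (Fin (2 * I) → Fin K) :=
  univ.filter fun L => ∀ s : Fin K, (univ.filter fun i => L i = s).card = Nc s

/-- The count `a_{st}(L)`: the number of matched pairs `j` with `{L(2j-1), L(2j)} = {s,t}`.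
For `s ≠ t` this is the cross-count; for `s = t` it is the pure count (both endpoints labeled
`s`). -/
def crossCount (I K : ℕ) (L : Fin (2 * I) → Fin K) (s t : Fin K) : ℕ :=
  (univ.filter fun j : Fin I =>
    ({L (ep1 j), L (ep2 j)} : Finset (Fin K)) = ({s, t} : Finset (Fin K))).card

/-- Expectation of a real-valued statistic under a uniformly random labeling. -/
noncomputable def expct (I K : ℕ) (Nc : Fin K → ℕ)
    (X : (Fin (2 * I) → Fin K) → ℝ) : ℝ :=
  (∑ L ∈ labelings I K Nc, X L) / ((labelings I K Nc).card : ℝ)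

open Classical in
/-- Probability of an event under a uniformly random labeling. -/
noncomputable def pr (I K : ℕ) (Nc : Fin K → ℕ)
    (ev : (Fin (2 * I) → Fin K) → Prop) : ℝ :=
  (((labelings I K Nc).filter ev).card : ℝ) / ((labelings I K Nc).card : ℝ)

/-- Variance of a real-valued statistic under a uniformly random labeling. -/
noncomputable def variance (I K : ℕ) (Nc : Fin K → ℕ)
    (X : (Fin (2 * I) → Fin K) → ℝ) : ℝ :=
  expct I K Nc (fun L => (X L - expct I K Nc X) ^ 2)

/-- Covariance of two real-valued statistics under a uniformly random labeling. -/
noncomputable def covar (I K : ℕ) (Nc : Fin K → ℕ)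
    (X Y : (Fin (2 * I) → Fin K) → ℝ) : ℝ :=
  expct I K Nc (fun L => (X L - expct I K Nc X) * (Y L - expct I K Nc Y))

/-- The index set of (unordered) pairs `s < t`, indexing the cross-count vector. -/
abbrev Pairs (K : ℕ) := {q : Fin K × Fin K // q.1 < q.2}

/-- The covariance matrix of the cross-count vector `(a_{st})_{s<t}` under a uniformly
random labeling. -/
noncomputable def covMatrix (I K : ℕ) (Nc : Fin K → ℕ) :
    Matrix (Pairs K) (Pairs K) ℝ :=
  Matrix.of fun q r =>
    covar I K Nc (fun L => (crossCount I K L q.1.1 q.1.2 : ℝ))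
      (fun L => (crossCount I K L r.1.1 r.1.2 : ℝ))

end Crossmatch

/-!
The covariance matrix is `(#labelings)⁻¹` times the Gram matrix of the centred cross-count
statistics, so it is positive definite as soon as no nonzero linear combination `∑ g_{st} a_{st}`
is constant over the labelings. As every class size is even, labeling both endpoints of each
matched pair alike gives a labeling without cross pairs. Swapping the second endpoints of an
`s`-pure and a `t`-pure pair (both exist because the class sizes are positive) gives a labeling
whose only nonzero cross-count is `a_{st} = 2`. Comparing the two labelings forces `g_{st} = 0`.
-/

theorem Finset.pair_eq_pair_iff {α : Type*} [DecidableEq α] {x y z w : α} :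
    ({x, y} : Finset α) = {z, w} ↔ x = z ∧ y = w ∨ x = w ∧ y = z := by
  rw [← Finset.coe_inj, Finset.coe_pair, Finset.coe_pair, Set.pair_eq_pair_iff]

theorem Fintype.exists_card_fiber_eq {ι κ : Type*} [Fintype ι] [Fintype κ] [DecidableEq κ]
    (m : κ → ℕ) (hm : ∑ k, m k = Fintype.card ι) :
    ∃ f : ι → κ, ∀ k, #{i | f i = k} = m k := by
  have e : ι ≃ Σ k, Fin (m k) := Fintype.equivOfCardEq (by simp [hm])
  refine ⟨fun i => (e i).1, fun k => ?_⟩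
  rw [← Fintype.card_subtype, ← Fintype.card_fin (m k)]
  exact Fintype.card_congr ((e.subtypeEquiv fun _ => Iff.rfl).trans (Equiv.sigmaSubtype k))

theorem linearIndependent_toLp_sub {ι α : Type*} [Fintype ι] (S : Finset α) (X : ι → α → ℝ)
    (c : ι → ℝ)
    (h : ∀ g : ι → ℝ, (∀ L ∈ S, ∀ L' ∈ S, ∑ i, g i * X i L = ∑ i, g i * X i L') → g = 0) :
    LinearIndependent ℝ fun i => WithLp.toLp 2 fun L : S => X i L - c i := by
  rw [Fintype.linearIndependent_iff]
  intro g hg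
  have hconst : ∀ L ∈ S, ∑ i, g i * X i L = ∑ i, g i * c i := fun L hL => by
    have := congrArg (fun v : EuclideanSpace ℝ S => v ⟨L, hL⟩) hg
    simpa [Finset.sum_apply, mul_sub, Finset.sum_sub_distrib, sub_eq_zero] using this
  exact congrFun (h g fun L hL L' hL' => (hconst L hL).trans (hconst L' hL').symm)

namespace Crossmatch

noncomputable def centered (I K : ℕ) (Nc : Fin K → ℕ) (X : (Fin (2 * I) → Fin K) → ℝ) :
    EuclideanSpace ℝ (labelings I K Nc) :=
  WithLp.toLp 2 fun L => X L - expct I K Nc X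

section Covariance

variable {I K : ℕ} {Nc : Fin K → ℕ}

theorem covar_eq_inner (X Y : (Fin (2 * I) → Fin K) → ℝ) :
    covar I K Nc X Y
      = ((labelings I K Nc).card : ℝ)⁻¹ * inner ℝ (centered I K Nc X) (centered I K Nc Y) := by
  rw [covar, expct, div_eq_inv_mul, PiLp.inner_apply, ← Finset.sum_coe_sort]
  simp [centered, mul_comm]

theorem covMatrix_eq_smul_gram :
    covMatrix I K Nc = ((labelings I K Nc).card : ℝ)⁻¹ •
      Matrix.gram ℝ fun q : Pairs K => centered I K Nc fun L => crossCount I K L q.1.1 q.1.2 := by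
  ext q r
  exact covar_eq_inner _ _

theorem posDef_covMatrix_of_forall_sum_eq (hS : (labelings I K Nc).Nonempty)
    (h : ∀ g : Pairs K → ℝ, (∀ L ∈ labelings I K Nc, ∀ L' ∈ labelings I K Nc,
      ∑ q, g q * crossCount I K L q.1.1 q.1.2 = ∑ q, g q * crossCount I K L' q.1.1 q.1.2) →
      g = 0) :
    (covMatrix I K Nc).PosDef := by
  rw [covMatrix_eq_smul_gram]
  exact (Matrix.posDef_gram_of_linearIndependent (linearIndependent_toLp_sub _ _ _ h)).smul
    (by positivity)

end Covariance

def matchingEquiv (I : ℕ) : Fin I ⊕ Fin I ≃ Fin (2 * I) where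
  toFun := Sum.elim ep1 ep2
  invFun i := if i.val % 2 = 0 then .inl ⟨i / 2, by omega⟩ else .inr ⟨i / 2, by omega⟩
  left_inv := by
    rintro (j | j) <;> simp [ep1, ep2, Fin.ext_iff]
    omega
  right_inv i := by
    by_cases h : i.val % 2 = 0 <;> simp [h, ep1, ep2, Fin.ext_iff] <;> omega

section Interleave

variable {I K : ℕ}

def interleave (M M' : Fin I → Fin K) : Fin (2 * I) → Fin K :=
  Sum.elim M M' ∘ (matchingEquiv I).symm

@[simp]
theorem interleave_ep1 (M M' : Fin I → Fin K) (j : Fin I) : interleave M M' (ep1 j) = M j := by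
  simp [interleave, ← show matchingEquiv I (.inl j) = ep1 j from rfl]

@[simp]
theorem interleave_ep2 (M M' : Fin I → Fin K) (j : Fin I) : interleave M M' (ep2 j) = M' j := by
  simp [interleave, ← show matchingEquiv I (.inr j) = ep2 j from rfl]

theorem card_interleave_eq (M M' : Fin I → Fin K) (s : Fin K) :
    #{i | interleave M M' i = s} = #{j | M j = s} + #{j | M' j = s} := by
  simp only [Finset.card_filter]
  rw [← (matchingEquiv I).sum_comp, Fintype.sum_sum_type]
  simp [interleave]

theorem interleave_mem_labelings {Nc : Fin K → ℕ} {M : Fin I → Fin K}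
    (hM : ∀ s, 2 * #{j | M j = s} = Nc s) (σ : Equiv.Perm (Fin I)) :
    interleave M (M ∘ σ) ∈ labelings I K Nc := by
  have hσ (s : Fin K) : #{j | M (σ j) = s} = #{j | M j = s} := by
    simp only [Finset.card_filter]
    exact Equiv.sum_comp σ fun j => if M j = s then 1 else 0
  simp only [labelings, Finset.mem_filter, Finset.mem_univ, true_and, card_interleave_eq,
    Function.comp_apply, hσ, ← two_mul, hM, implies_true]

theorem crossCount_interleave (M M' : Fin I → Fin K) (s t : Fin K) :
    crossCount I K (interleave M M') s t = #{j | ({M j, M' j} : Finset (Fin K)) = {s, t}} := by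
  simp [crossCount]

theorem crossCount_interleave_self (M : Fin I → Fin K) {u v : Fin K} (huv : u ≠ v) :
    crossCount I K (interleave M M) u v = 0 := by
  simp only [crossCount_interleave, Finset.pair_eq_pair_iff, Finset.card_eq_zero,
    Finset.filter_eq_empty_iff]
  grind

theorem crossCount_interleave_swap {M : Fin I → Fin K} {j j' : Fin I} {q : Pairs K}
    (hj : M j = q.1.1) (hj' : M j' = q.1.2) (r : Pairs K) :
    crossCount I K (interleave M (M ∘ Equiv.swap j j')) r.1.1 r.1.2 = if r = q then 2 else 0 := by
  have hjj' : j ≠ j' := by rintro rfl; exact q.2.ne (hj.symm.trans hj')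
  have hrq : r = q ↔ r.1.1 = q.1.1 ∧ r.1.2 = q.1.2 := by rw [Subtype.ext_iff, Prod.ext_iff]
  have hr : r.1.1 < r.1.2 := r.2
  have hq : q.1.1 < q.1.2 := q.2
  simp only [crossCount_interleave, Finset.pair_eq_pair_iff, Function.comp_apply, hrq]
  split_ifs with h
  · convert Finset.card_pair hjj'
    ext i
    simp only [Finset.mem_filter, Finset.mem_univ, true_and, Finset.mem_insert,
      Finset.mem_singleton]
    grind
  · simp only [Finset.card_eq_zero, Finset.filter_eq_empty_iff]
    grind

end Interleave

theorem stmt13_general (K I : ℕ)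
    (Nc : Fin K → ℕ) (hNpos : ∀ s, 0 < Nc s) (hNeven : ∀ s, Even (Nc s))
    (hNsum : ∑ s, Nc s = 2 * I) :
    (covMatrix I K Nc).PosDef ∧ IsUnit (covMatrix I K Nc) := by
  have hhalf (s : Fin K) : 2 * (Nc s / 2) = Nc s := Nat.two_mul_div_two_of_even (hNeven s)
  obtain ⟨M, hM⟩ := Fintype.exists_card_fiber_eq (ι := Fin I) (fun s => Nc s / 2) (by
    rw [Fintype.card_fin, ← Nat.mul_left_cancel_iff two_pos, Finset.mul_sum]
    simp only [hhalf, hNsum])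
  replace hM (s : Fin K) : 2 * #{j | M j = s} = Nc s := by rw [hM, hhalf]
  have hmem := interleave_mem_labelings hM
  have hposDef := posDef_covMatrix_of_forall_sum_eq ⟨_, hmem 1⟩ fun g hg => by
    funext q
    have hfiber (s : Fin K) : ∃ j, M j = s := by
      simpa [Finset.card_pos, Finset.filter_nonempty_iff] using (hM s).trans_gt (hNpos s)
    obtain ⟨j, hj⟩ := hfiber q.1.1
    obtain ⟨j', hj'⟩ := hfiber q.1.2
    have hpure (r : Pairs K) := crossCount_interleave_self M r.2.ne
    simpa [hpure, crossCount_interleave_swap hj hj'] using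
      hg _ (hmem 1) _ (hmem (Equiv.swap j j'))
  exact ⟨hposDef, hposDef.isUnit⟩

/-- if every class size is a positive even integer, the covariance matrix of
the cross-count vector is positive definite; in particular it is invertible. -/
theorem stmt13 (K I : ℕ) (hK : 2 ≤ K) (hI : 1 ≤ I)
    (Nc : Fin K → ℕ) (hNpos : ∀ s, 0 < Nc s) (hNeven : ∀ s, Even (Nc s))
    (hNsum : ∑ s, Nc s = 2 * I) :
    (covMatrix I K Nc).PosDef ∧ IsUnit (covMatrix I K Nc) :=
  stmt13_general K I Nc hNpos hNeven hNsum

end Crossmatch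
end

section
/- H(f_1,…,f_K) ≤ (1 − Σ_{s=1}^K p_s²)/2, and equality holds if and only if f_1 = f_2 = ⋯ = f_K Lebesgue-almost everywhere on ℝ^d. (Note that the right-hand side equals H(f,…,f) for any common probability density f.) -/
/-!
Put `φ = ∑ₛ pₛ fₛ`. Pointwise, `(∑ₛ pₛ fₛ)² = ∑ₛ pₛ² fₛ² + 2 ∑_{s<t} pₛ pₜ fₛ fₜ`; dividing by `φ`
and integrating gives `H = (1 - ∑ₛ pₛ² ∫ fₛ²/φ) / 2`. Each `∫ fₛ²/φ` equals `1 + ∫ (fₛ - φ)²/φ`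
(a χ²-divergence), so it is at least `1`, with equality iff `fₛ = φ` a.e.; and all the `fₛ` equal
`φ` a.e. iff they all agree a.e. Integrability of `fₛ fₜ/φ` follows from `fₛ fₜ/φ ≤ fₛ/pₜ`.
-/

open Finset MeasureTheory

theorem sq_sum_eq_sum_sq_add_two_mul_sum_lt {ι R : Type*} [Fintype ι] [LinearOrder ι]
    [CommSemiring R] (a : ι → R) :
    (∑ i, a i) ^ 2
      = ∑ i, a i ^ 2 + 2 * ∑ q ∈ univ.filter (fun q : ι × ι => q.1 < q.2), a q.1 * a q.2 := by
  have hswap : ∑ q ∈ univ.filter (fun q : ι × ι => q.2 < q.1), a q.1 * a q.2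
      = ∑ q ∈ univ.filter (fun q : ι × ι => q.1 < q.2), a q.1 * a q.2 :=
    sum_nbij' Prod.swap Prod.swap (by simp) (by simp) (by simp) (by simp) (by simp [mul_comm])
  have hdiag : ∑ q ∈ univ.filter (fun q : ι × ι => q.1 = q.2), a q.1 * a q.2 = ∑ i, a i ^ 2 :=
    sum_nbij' Prod.fst (fun i => (i, i)) (by simp) (by simp) (by simp +contextual [Prod.ext_iff])
      (by simp) (by simp +contextual [sq])
  have hrest : ∑ q ∈ univ.filter (fun q : ι × ι => ¬ q.1 < q.2), a q.1 * a q.2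
      = ∑ q ∈ univ.filter (fun q : ι × ι => q.1 = q.2), a q.1 * a q.2
        + ∑ q ∈ univ.filter (fun q : ι × ι => q.2 < q.1), a q.1 * a q.2 := by
    rw [← sum_union (disjoint_filter.2 fun q _ h => h ▸ lt_irrefl q.1)]
    congr 1
    ext q
    simp only [mem_filter, mem_univ, true_and, mem_union, not_lt]
    exact le_iff_eq_or_lt.trans (or_congr eq_comm Iff.rfl)
  calc (∑ i, a i) ^ 2 = ∑ q : ι × ι, a q.1 * a q.2 := by
        rw [sq, sum_mul_sum, ← univ_product_univ, sum_product]
    _ = ∑ q ∈ univ.filter (fun q : ι × ι => q.1 < q.2), a q.1 * a q.2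
        + (∑ q ∈ univ.filter (fun q : ι × ι => q.1 = q.2), a q.1 * a q.2
          + ∑ q ∈ univ.filter (fun q : ι × ι => q.2 < q.1), a q.1 * a q.2) := by
        rw [← hrest, sum_filter_add_sum_filter_not]
    _ = _ := by rw [hswap, hdiag]; ring

theorem sum_lt_mul_div_sum_eq {ι K : Type*} [Fintype ι] [LinearOrder ι] [Field K]
    [NeZero (2 : K)] (a : ι → K) :
    ∑ q ∈ univ.filter (fun q : ι × ι => q.1 < q.2), a q.1 * a q.2 / ∑ i, a i
      = (∑ i, a i - ∑ i, a i ^ 2 / ∑ i, a i) / 2 := by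
  rw [← sum_div, ← sum_div]
  -- if `∑ i, a i = 0` both sides vanish, by the convention `x / 0 = 0`
  rcases eq_or_ne (∑ i, a i) 0 with hS | hS
  · simp [hS]
  · field_simp
    rw [sq_sum_eq_sum_sq_add_two_mul_sum_lt a]
    ring

theorem sq_div_sub_two_mul_add_eq {K : Type*} [Field K] {x y : K} (h : y = 0 → x = 0) :
    x ^ 2 / y - 2 * x + y = (x - y) ^ 2 / y := by
  rcases eq_or_ne y 0 with hy | hy
  · simp [hy, h hy]
  · field_simp
    ring

theorem mul_div_le_div_of_mul_le {K : Type*} [Field K] [LinearOrder K] [IsStrictOrderedRing K]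
    {x y c S : K} (hx : 0 ≤ x) (hy : 0 ≤ y) (hc : 0 < c) (h : c * y ≤ S) :
    x * y / S ≤ x / c := by
  rcases (mul_nonneg hc.le hy |>.trans h).eq_or_lt with hS | hS
  · rw [← hS, div_zero]
    exact div_nonneg hx hc.le
  · rw [div_le_div_iff₀ hS hc, mul_assoc, mul_comm y]
    exact mul_le_mul_of_nonneg_left h hx

theorem eq_zero_of_sum_mul_eq_zero {ι K : Type*} [Fintype ι] [Field K] [LinearOrder K]
    [IsStrictOrderedRing K] {p x : ι → K} {s : ι} (hp : ∀ r, 0 ≤ p r) (hs : 0 < p s)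
    (hx : ∀ r, 0 ≤ x r) (h : ∑ r, p r * x r = 0) : x s = 0 := by
  rw [sum_eq_zero_iff_of_nonneg fun r _ => mul_nonneg (hp r) (hx r)] at h
  exact (mul_eq_zero.1 (h s (mem_univ s))).resolve_left hs.ne'

section ChiSquare

variable {α : Type*} [MeasurableSpace α] {μ : Measure α} {f g : α → ℝ}

theorem integral_sq_div_eq_one_add (hf : Integrable f μ) (hg : Integrable g μ)
    (hsq : Integrable (fun z => f z ^ 2 / g z) μ) (hf1 : ∫ z, f z ∂μ = 1)
    (hg1 : ∫ z, g z ∂μ = 1) (hsupp : ∀ z, g z = 0 → f z = 0) :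
    ∫ z, f z ^ 2 / g z ∂μ = 1 + ∫ z, (f z - g z) ^ 2 / g z ∂μ := by
  simp_rw [← sq_div_sub_two_mul_add_eq (hsupp _)]
  rw [integral_add (f := fun z => f z ^ 2 / g z - 2 * f z) (hsq.sub (hf.const_mul 2)) hg,
    integral_sub hsq (hf.const_mul 2), integral_const_mul, hf1, hg1]
  ring

theorem one_le_integral_sq_div (hf : Integrable f μ) (hg : Integrable g μ)
    (hsq : Integrable (fun z => f z ^ 2 / g z) μ) (hf1 : ∫ z, f z ∂μ = 1)
    (hg1 : ∫ z, g z ∂μ = 1) (hsupp : ∀ z, g z = 0 → f z = 0) (hg0 : 0 ≤ g) :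
    1 ≤ ∫ z, f z ^ 2 / g z ∂μ := by
  rw [integral_sq_div_eq_one_add hf hg hsq hf1 hg1 hsupp]
  exact le_add_of_nonneg_right (integral_nonneg fun z => div_nonneg (sq_nonneg _) (hg0 z))

theorem integral_sq_div_eq_one_iff (hf : Integrable f μ) (hg : Integrable g μ)
    (hsq : Integrable (fun z => f z ^ 2 / g z) μ) (hf1 : ∫ z, f z ∂μ = 1)
    (hg1 : ∫ z, g z ∂μ = 1) (hsupp : ∀ z, g z = 0 → f z = 0) (hg0 : 0 ≤ g) :
    ∫ z, f z ^ 2 / g z ∂μ = 1 ↔ f =ᵐ[μ] g := by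
  have hchi : Integrable (fun z => (f z - g z) ^ 2 / g z) μ := by
    refine ((hsq.sub (hf.const_mul 2)).add hg).congr (ae_of_all _ fun z => ?_)
    exact sq_div_sub_two_mul_add_eq (hsupp z)
  rw [integral_sq_div_eq_one_add hf hg hsq hf1 hg1 hsupp, add_eq_left,
    integral_eq_zero_iff_of_nonneg (fun z => div_nonneg (sq_nonneg _) (hg0 z)) hchi]
  refine Filter.eventually_congr (ae_of_all _ fun z => ?_)
  rcases eq_or_ne (g z) 0 with hz | hz
  · simp [hz, hsupp z hz]
  · simp [hz, sub_eq_zero]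

end ChiSquare

section Mixture

variable {α ι : Type*} [MeasurableSpace α] {μ : Measure α} [Fintype ι]
  {f : ι → α → ℝ} {p : ι → ℝ}

theorem integrable_sum_mul (hfi : ∀ s, Integrable (f s) μ) :
    Integrable (fun z => ∑ s, p s * f s z) μ :=
  integrable_finsetSum _ fun s _ => (hfi s).const_mul (p s)

theorem integral_sum_mul_eq_one (hfi : ∀ s, Integrable (f s) μ) (hint : ∀ s, ∫ z, f s z ∂μ = 1)
    (hps : ∑ s, p s = 1) : ∫ z, ∑ s, p s * f s z ∂μ = 1 := by
  rw [integral_finsetSum _ fun s _ => (hfi s).const_mul (p s)]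
  simp_rw [integral_const_mul, hint, mul_one, hps]

theorem integrable_mul_div_sum_mul {s t : ι} (hp : ∀ r, 0 ≤ p r) (ht : 0 < p t)
    (hf : ∀ r z, 0 ≤ f r z) (hfi : ∀ r, Integrable (f r) μ) :
    Integrable (fun z => f s z * f t z / ∑ r, p r * f r z) μ := by
  have hmeas : ∀ r, AEMeasurable (f r) μ := fun r => (hfi r).aemeasurable
  refine ((hfi s).div_const (p t)).mono' ?_ (ae_of_all _ fun z => ?_)
  · exact (((hmeas s).mul (hmeas t)).div
      (integrable_sum_mul hfi).aemeasurable).aestronglyMeasurable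
  · have hφ : 0 ≤ ∑ r, p r * f r z := sum_nonneg fun r _ => mul_nonneg (hp r) (hf r z)
    rw [Real.norm_of_nonneg (div_nonneg (mul_nonneg (hf s z) (hf t z)) hφ)]
    exact mul_div_le_div_of_mul_le (hf s z) (hf t z) ht
      (single_le_sum (fun r _ => mul_nonneg (hp r) (hf r z)) (mem_univ t))

theorem sum_lt_mul_integral_mul_div_sum_mul [LinearOrder ι] (hfi : ∀ s, Integrable (f s) μ)
    (hquot : ∀ s t, Integrable (fun z => f s z * f t z / ∑ r, p r * f r z) μ) :
    ∑ q ∈ univ.filter (fun q : ι × ι => q.1 < q.2),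
        p q.1 * p q.2 * ∫ z, f q.1 z * f q.2 z / (∑ r, p r * f r z) ∂μ
      = (∫ z, ∑ r, p r * f r z ∂μ
          - ∑ s, p s ^ 2 * ∫ z, f s z ^ 2 / (∑ r, p r * f r z) ∂μ) / 2 := by
  have hsq : ∀ s, Integrable (fun z => p s ^ 2 * (f s z ^ 2 / ∑ r, p r * f r z)) μ := fun s =>
    (by simpa only [sq] using hquot s s : Integrable _ μ).const_mul _
  have hpoint : ∀ z, ∑ q ∈ univ.filter (fun q : ι × ι => q.1 < q.2),
        p q.1 * p q.2 * (f q.1 z * f q.2 z / ∑ r, p r * f r z)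
      = (∑ r, p r * f r z - ∑ s, p s ^ 2 * (f s z ^ 2 / ∑ r, p r * f r z)) / 2 := fun z => by
    convert sum_lt_mul_div_sum_eq (fun r => p r * f r z) using 1
    · exact sum_congr rfl fun q _ => by ring
    · congr 2
      exact sum_congr rfl fun s _ => by ring
  calc _ = ∫ z, ∑ q ∈ univ.filter (fun q : ι × ι => q.1 < q.2),
          p q.1 * p q.2 * (f q.1 z * f q.2 z / ∑ r, p r * f r z) ∂μ := by
        rw [integral_finsetSum _ fun q _ => (hquot q.1 q.2).const_mul _]
        simp_rw [integral_const_mul]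
    _ = _ := by
        simp_rw [hpoint]
        rw [integral_div,
          integral_sub (integrable_sum_mul hfi) (integrable_finsetSum _ fun s _ => hsq s),
          integral_finsetSum _ fun s _ => hsq s]
        simp_rw [integral_const_mul]

theorem forall_ae_eq_sum_mul_iff (hps : ∑ s, p s = 1) :
    (∀ s, f s =ᵐ[μ] fun z => ∑ r, p r * f r z) ↔ ∀ s t, f s =ᵐ[μ] f t := by
  refine ⟨fun h s t => (h s).trans (h t).symm, fun h s => ?_⟩
  filter_upwards [ae_all_iff.2 fun r => h r s] with z hz
  simp_rw [hz, ← sum_mul, hps, one_mul]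

end Mixture

theorem stmt15_general (d K : ℕ)
    (f : Fin K → (Fin d → ℝ) → ℝ)
    (hnn : ∀ s z, 0 ≤ f s z) (hint : ∀ s, ∫ z : Fin d → ℝ, f s z = 1)
    (p : Fin K → ℝ) (hp : ∀ s, p s ∈ Set.Ioo (0 : ℝ) 1) (hps : ∑ s, p s = 1) :
    (∑ q ∈ univ.filter (fun q : Fin K × Fin K => q.1 < q.2),
        p q.1 * p q.2 * ∫ z : Fin d → ℝ, f q.1 z * f q.2 z / (∑ s, p s * f s z))
      ≤ (1 - ∑ s, (p s) ^ 2) / 2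
    ∧ ((∑ q ∈ univ.filter (fun q : Fin K × Fin K => q.1 < q.2),
          p q.1 * p q.2 * ∫ z : Fin d → ℝ, f q.1 z * f q.2 z / (∑ s, p s * f s z))
        = (1 - ∑ s, (p s) ^ 2) / 2
      ↔ ∀ s t : Fin K, f s =ᵐ[volume] f t) := by
  have hp0 : ∀ s, 0 < p s := fun s => (hp s).1
  have hfi : ∀ s, Integrable (f s) := fun s => integrable_of_integral_eq_one (hint s)
  have hquot : ∀ s t, Integrable (fun z => f s z * f t z / ∑ r, p r * f r z) :=
    fun s t => integrable_mul_div_sum_mul (fun r => (hp0 r).le) (hp0 t) hnn hfi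
  have hsq : ∀ s, Integrable (fun z => f s z ^ 2 / ∑ r, p r * f r z) := fun s => by
    simpa only [sq] using hquot s s
  have hφ1 := integral_sum_mul_eq_one hfi hint hps
  have hφ0 : 0 ≤ fun z => ∑ r, p r * f r z := fun z =>
    sum_nonneg fun r _ => mul_nonneg (hp0 r).le (hnn r z)
  have hsupp : ∀ s z, ∑ r, p r * f r z = 0 → f s z = 0 := fun s z =>
    eq_zero_of_sum_mul_eq_zero (fun r => (hp0 r).le) (hp0 s) (fun r => hnn r z)
  have hle : ∀ s ∈ univ, p s ^ 2 ≤ p s ^ 2 * ∫ z, f s z ^ 2 / ∑ r, p r * f r z :=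
    fun s _ => le_mul_of_one_le_right (sq_nonneg _)
      (one_le_integral_sq_div (hfi s) (integrable_sum_mul hfi) (hsq s) (hint s) hφ1 (hsupp s) hφ0)
  rw [sum_lt_mul_integral_mul_div_sum_mul hfi hquot, hφ1]
  refine ⟨by linarith [sum_le_sum hle], ?_⟩
  rw [← forall_ae_eq_sum_mul_iff hps]
  calc _ ↔ ∑ s, p s ^ 2 = ∑ s, p s ^ 2 * ∫ z, f s z ^ 2 / ∑ r, p r * f r z := by
        constructor <;> intro h <;> linarith
    _ ↔ _ := by
        rw [sum_eq_sum_iff_of_le hle]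
        simp only [mem_univ, true_implies, eq_comm (a := p _ ^ 2),
          mul_eq_left₀ (pow_pos (hp0 _) 2).ne', integral_sq_div_eq_one_iff (hfi _)
            (integrable_sum_mul hfi) (hsq _) (hint _) hφ1 (hsupp _) hφ0]

/-- `H(f_1,…,f_K) = Σ_{s<t} p_s p_t ∫ f_s f_t/φ ≤ (1 - Σ_s p_s²)/2`, with
equality iff `f_1 = ⋯ = f_K` Lebesgue-almost everywhere. Here `φ = Σ_s p_s f_s`, and the
integrand is `0` on `{φ = 0}` (Lean's convention `x/0 = 0`). -/
theorem stmt15 (d K : ℕ) (hd : 1 ≤ d) (hK : 2 ≤ K)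
    (f : Fin K → (Fin d → ℝ) → ℝ) (hmeas : ∀ s, Measurable (f s))
    (hnn : ∀ s z, 0 ≤ f s z) (hint : ∀ s, ∫ z : Fin d → ℝ, f s z = 1)
    (p : Fin K → ℝ) (hp : ∀ s, p s ∈ Set.Ioo (0 : ℝ) 1) (hps : ∑ s, p s = 1) :
    (∑ q ∈ univ.filter (fun q : Fin K × Fin K => q.1 < q.2),
        p q.1 * p q.2 * ∫ z : Fin d → ℝ, f q.1 z * f q.2 z / (∑ s, p s * f s z))
      ≤ (1 - ∑ s, (p s) ^ 2) / 2
    ∧ ((∑ q ∈ univ.filter (fun q : Fin K × Fin K => q.1 < q.2),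
          p q.1 * p q.2 * ∫ z : Fin d → ℝ, f q.1 z * f q.2 z / (∑ s, p s * f s z))
        = (1 - ∑ s, (p s) ^ 2) / 2
      ↔ ∀ s t : Fin K, f s =ᵐ[volume] f t) :=
  stmt15_general d K f hnn hint p hp hps
end

section
/- If there exist 1 ≤ s < t ≤ K such that f_s ≠ f_t on a set of positive Lebesgue measure, then H(f_1,…,f_K) < (1 − Σ_{s=1}^K p_s²)/2 (strict inequality). -/
open Finset MeasureTheory

theorem pairSumSplit18 {K : ℕ} (A : Fin K × Fin K → ℝ)
    (hsymm : ∀ q : Fin K × Fin K, A q.swap = A q) :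
    ∑ q : Fin K × Fin K, A q
      = (∑ s, A (s, s)) + 2 * ∑ q ∈ univ.filter (fun q : Fin K × Fin K => q.1 < q.2), A q := by
  classical
  have h1 : ∑ q : Fin K × Fin K, A q
      = ∑ q ∈ univ.filter (fun q : Fin K × Fin K => q.1 = q.2), A q
        + ∑ q ∈ univ.filter (fun q : Fin K × Fin K => ¬ q.1 = q.2), A q :=
    (Finset.sum_filter_add_sum_filter_not _ _ _).symm
  have himg : univ.filter (fun q : Fin K × Fin K => q.1 = q.2)
      = univ.image (fun s : Fin K => (s, s)) := by
    ext q
    rcases q with ⟨a, b⟩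
    simp only [mem_filter, mem_univ, true_and, mem_image, Prod.mk.injEq]
    constructor
    · intro h; exact ⟨a, rfl, h⟩
    · rintro ⟨s, rfl, rfl⟩; rfl
  have hdiag : ∑ q ∈ univ.filter (fun q : Fin K × Fin K => q.1 = q.2), A q = ∑ s, A (s, s) := by
    rw [himg, Finset.sum_image]
    intro a _ b _ h
    simpa using congrArg Prod.fst h
  have h2 : ∑ q ∈ univ.filter (fun q : Fin K × Fin K => ¬ q.1 = q.2), A q
      = ∑ q ∈ (univ.filter (fun q : Fin K × Fin K => ¬ q.1 = q.2)).filter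
            (fun q => q.1 < q.2), A q
        + ∑ q ∈ (univ.filter (fun q : Fin K × Fin K => ¬ q.1 = q.2)).filter
            (fun q => ¬ q.1 < q.2), A q :=
    (Finset.sum_filter_add_sum_filter_not _ _ _).symm
  rw [Finset.filter_filter, Finset.filter_filter] at h2
  have e1 : univ.filter (fun q : Fin K × Fin K => ¬ q.1 = q.2 ∧ q.1 < q.2)
      = univ.filter (fun q : Fin K × Fin K => q.1 < q.2) := by
    apply Finset.filter_congr
    intro q _
    exact ⟨fun h => h.2, fun h => ⟨ne_of_lt h, h⟩⟩
  have e2 : univ.filter (fun q : Fin K × Fin K => ¬ q.1 = q.2 ∧ ¬ q.1 < q.2)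
      = univ.filter (fun q : Fin K × Fin K => q.2 < q.1) := by
    apply Finset.filter_congr
    intro q _
    constructor
    · intro h
      exact lt_of_le_of_ne (not_lt.mp h.2) (fun hh => h.1 hh.symm)
    · intro h
      exact ⟨fun hh => absurd hh.symm (ne_of_lt h), not_lt.mpr h.le⟩
  have e3 : ∑ q ∈ univ.filter (fun q : Fin K × Fin K => q.2 < q.1), A q
      = ∑ q ∈ univ.filter (fun q : Fin K × Fin K => q.1 < q.2), A q := by
    refine Finset.sum_equiv (Equiv.prodComm (Fin K) (Fin K)) ?_ ?_
    · intro q; simp [Equiv.prodComm]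
    · intro q _
      exact (hsymm q).symm
  rw [e1, e2, e3] at h2
  rw [h1, hdiag, h2]
  ring

/-- if some `f_s ≠ f_t` (with `s < t`) on a set of positive Lebesgue measure,
then `H(f_1,…,f_K) < (1 - Σ_s p_s²)/2` strictly. Here `φ = Σ_s p_s f_s`, and the integrand
is `0` on `{φ = 0}` (Lean's convention `x/0 = 0`). -/
theorem stmt18 (d K : ℕ) (hd : 1 ≤ d) (hK : 2 ≤ K)
    (f : Fin K → (Fin d → ℝ) → ℝ) (hmeas : ∀ s, Measurable (f s))
    (hnn : ∀ s z, 0 ≤ f s z) (hint : ∀ s, ∫ z : Fin d → ℝ, f s z = 1)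
    (p : Fin K → ℝ) (hp : ∀ s, p s ∈ Set.Ioo (0 : ℝ) 1) (hps : ∑ s, p s = 1)
    (hne : ∃ s t : Fin K, s < t ∧ 0 < volume {z : Fin d → ℝ | f s z ≠ f t z}) :
    (∑ q ∈ univ.filter (fun q : Fin K × Fin K => q.1 < q.2),
        p q.1 * p q.2 * ∫ z : Fin d → ℝ, f q.1 z * f q.2 z / (∑ s, p s * f s z))
      < (1 - ∑ s, (p s) ^ 2) / 2 := by
  classical
  have hpp : ∀ s, 0 < p s := fun s => (hp s).1
  set φ : (Fin d → ℝ) → ℝ := fun z => ∑ s, p s * f s z with hφdef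
  have hφz : ∀ z, (∑ s, p s * f s z) = φ z := fun z => rfl
  simp_rw [hφz]
  have hφmeas : Measurable φ :=
    Finset.measurable_sum _ fun s _ => (hmeas s).const_mul _
  have hφnn : ∀ z, 0 ≤ φ z := fun z =>
    Finset.sum_nonneg fun s _ => mul_nonneg (hpp s).le (hnn s z)
  have hle : ∀ s z, p s * f s z ≤ φ z := fun s z =>
    Finset.single_le_sum (fun t _ => mul_nonneg (hpp t).le (hnn t z)) (mem_univ s)
  have hzero : ∀ z, φ z = 0 → ∀ s, f s z = 0 := by
    intro z hz s
    have h1 := hle s z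
    have h2 : 0 ≤ p s * f s z := mul_nonneg (hpp s).le (hnn s z)
    have h3 : p s * f s z = 0 := le_antisymm (hz ▸ h1) h2
    rcases mul_eq_zero.mp h3 with h | h
    · exact absurd h (hpp s).ne'
    · exact h
  have hfint : ∀ s, Integrable (f s) := by
    intro s
    by_contra h
    exact one_ne_zero ((hint s).symm.trans (integral_undef h))
  have hφint : Integrable φ :=
    integrable_finset_sum _ fun s _ => (hfint s).const_mul _
  have hφone : ∫ z, φ z = 1 := by
    rw [hφdef]
    rw [integral_finset_sum _ fun s (_ : s ∈ univ) => (hfint s).const_mul (p s)]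
    simp_rw [integral_const_mul, hint, mul_one]
    exact hps
  have hFmeas : ∀ s t : Fin K, Measurable (fun z => f s z * f t z / φ z) :=
    fun s t => ((hmeas s).mul (hmeas t)).div hφmeas
  have hFnn : ∀ s t : Fin K, ∀ z, 0 ≤ f s z * f t z / φ z :=
    fun s t z => div_nonneg (mul_nonneg (hnn s z) (hnn t z)) (hφnn z)
  have hFle : ∀ s t : Fin K, ∀ z, f s z * f t z / φ z ≤ φ z / (p s * p t) := by
    intro s t z
    by_cases hz : φ z = 0
    · rw [hzero z hz s, hz]
      simp
    · have hz' : 0 < φ z := lt_of_le_of_ne (hφnn z) (Ne.symm hz)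
      rw [div_le_div_iff₀ hz' (mul_pos (hpp s) (hpp t))]
      nlinarith [mul_le_mul (hle s z) (hle t z) (mul_nonneg (hpp t).le (hnn t z)) (hφnn z)]
  have hFint : ∀ s t : Fin K, Integrable (fun z => f s z * f t z / φ z) := by
    intro s t
    refine Integrable.mono' (hφint.div_const (p s * p t)) (hFmeas s t).aestronglyMeasurable ?_
    filter_upwards with z
    rw [Real.norm_eq_abs, abs_of_nonneg (hFnn s t z)]
    exact hFle s t z
  have hpt : ∀ z, φ z
      = (∑ s, p s * p s * (f s z * f s z / φ z))
        + 2 * ∑ q ∈ univ.filter (fun q : Fin K × Fin K => q.1 < q.2),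
            p q.1 * p q.2 * (f q.1 z * f q.2 z / φ z) := by
    intro z
    have h0 : ∑ q : Fin K × Fin K, p q.1 * p q.2 * (f q.1 z * f q.2 z / φ z) = φ z := by
      rw [Fintype.sum_prod_type]
      have hrow : ∀ s : Fin K, ∑ t, p s * p t * (f s z * f t z / φ z)
          = (∑ t, (p s * f s z) * (p t * f t z)) / φ z := by
        intro s
        rw [Finset.sum_div]
        exact Finset.sum_congr rfl fun t _ => by ring
      simp_rw [hrow]
      rw [← Finset.sum_div, ← Finset.sum_mul_sum]
      rw [hφz z]
      by_cases hz : φ z = 0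
      · simp [hz]
      · rw [mul_div_assoc, div_self hz, mul_one]
    have hsy : ∀ q : Fin K × Fin K,
        (fun q : Fin K × Fin K => p q.1 * p q.2 * (f q.1 z * f q.2 z / φ z)) q.swap
          = (fun q : Fin K × Fin K => p q.1 * p q.2 * (f q.1 z * f q.2 z / φ z)) q := by
      intro q
      simp only [Prod.fst_swap, Prod.snd_swap]
      ring
    have hsplit := pairSumSplit18
      (fun q : Fin K × Fin K => p q.1 * p q.2 * (f q.1 z * f q.2 z / φ z)) hsy
    conv_lhs => rw [← h0]
    exact hsplit
  have key : (∑ s, p s * p s * ∫ z, f s z * f s z / φ z)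
      + 2 * (∑ q ∈ univ.filter (fun q : Fin K × Fin K => q.1 < q.2),
          p q.1 * p q.2 * ∫ z, f q.1 z * f q.2 z / φ z) = 1 := by
    have h1 : ∫ z, φ z
        = ∫ z, ((∑ s, p s * p s * (f s z * f s z / φ z))
          + 2 * ∑ q ∈ univ.filter (fun q : Fin K × Fin K => q.1 < q.2),
              p q.1 * p q.2 * (f q.1 z * f q.2 z / φ z)) :=
      integral_congr_ae (Filter.Eventually.of_forall hpt)
    rw [hφone] at h1
    rw [integral_add
        (integrable_finset_sum _ fun s _ => (hFint s s).const_mul _)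
        ((integrable_finset_sum _ fun q _ => (hFint q.1 q.2).const_mul _).const_mul 2),
      integral_finset_sum _ (fun s _ => (hFint s s).const_mul _),
      integral_const_mul,
      integral_finset_sum _ (fun q _ => (hFint q.1 q.2).const_mul _)] at h1
    simp_rw [integral_const_mul] at h1
    exact h1.symm
  have hptw : ∀ u : Fin K, ∀ z, 2 * f u z - φ z ≤ f u z * f u z / φ z := by
    intro u z
    by_cases hz : φ z = 0
    · rw [hzero z hz u, hz]
      simp
    · have hz' : 0 < φ z := lt_of_le_of_ne (hφnn z) (Ne.symm hz)
      rw [le_div_iff₀ hz']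
      nlinarith [sq_nonneg (f u z - φ z)]
  have hIge : ∀ u : Fin K, 1 ≤ ∫ z, f u z * f u z / φ z := by
    intro u
    have h2 : ∫ z, (2 * f u z - φ z) = 1 := by
      have hi2 : Integrable (fun z => 2 * f u z) := (hfint u).const_mul 2
      rw [integral_sub hi2 hφint, integral_const_mul, hint u, hφone]
      norm_num
    calc (1 : ℝ) = ∫ z, (2 * f u z - φ z) := h2.symm
    _ ≤ _ := by
      have hi3 : Integrable (fun z => 2 * f u z - φ z) := ((hfint u).const_mul 2).sub hφint
      exact integral_mono hi3 (hFint u u) (hptw u)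
  have hae : ∀ u : Fin K, (∫ z, f u z * f u z / φ z) ≤ 1 → f u =ᵐ[volume] φ := by
    intro u hIu
    have hIeq : ∫ z, f u z * f u z / φ z = 1 := le_antisymm hIu (hIge u)
    set g : (Fin d → ℝ) → ℝ := fun z => f u z * f u z / φ z - (2 * f u z - φ z) with hgdef
    have hi3 : Integrable (fun z => 2 * f u z - φ z) := ((hfint u).const_mul 2).sub hφint
    have hgint : Integrable g := (hFint u u).sub hi3
    have hgnn : 0 ≤ g := fun z => sub_nonneg.mpr (hptw u z)
    have hi2 : Integrable (fun z => 2 * f u z) := (hfint u).const_mul 2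
    have hg0 : ∫ z, g z = 0 := by
      have h7 : ∫ z, (f u z * f u z / φ z - (2 * f u z - φ z)) = 0 := by
        rw [integral_sub (hFint u u) hi3, integral_sub hi2 hφint, integral_const_mul,
          hint u, hφone, hIeq]
        norm_num
      exact h7
    have hg := (integral_eq_zero_iff_of_nonneg hgnn hgint).mp hg0
    filter_upwards [hg] with z hz
    simp only [hgdef, Pi.zero_apply] at hz
    by_cases h0 : φ z = 0
    · exact (hzero z h0 u).trans h0.symm
    · have h3 : f u z * f u z = (2 * f u z - φ z) * φ z := by
        have h4 : f u z * f u z / φ z = 2 * f u z - φ z := by linarith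
        rwa [div_eq_iff h0] at h4
      have h5 : (f u z - φ z) ^ 2 = 0 := by linear_combination h3
      have h6 : f u z - φ z = 0 := by
        have := pow_eq_zero_iff (n := 2) (by norm_num) |>.mp h5
        exact this
      linarith
  obtain ⟨s, t, hst, hpos⟩ := hne
  have hexists : ∃ u : Fin K, 1 < ∫ z, f u z * f u z / φ z := by
    by_contra hcon
    push_neg at hcon
    have hs := hae s (hcon s)
    have ht := hae t (hcon t)
    have hstae : f s =ᵐ[volume] f t := hs.trans ht.symm
    rw [Filter.EventuallyEq, ae_iff] at hstae
    exact absurd hstae hpos.ne'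
  obtain ⟨u, hu⟩ := hexists
  have hD : (∑ s, p s ^ 2) < ∑ s, p s * p s * ∫ z, f s z * f s z / φ z := by
    refine Finset.sum_lt_sum (fun i _ => ?_) ⟨u, mem_univ u, ?_⟩
    · have h8 := mul_le_mul_of_nonneg_left (hIge i) (mul_nonneg (hpp i).le (hpp i).le)
      nlinarith [h8]
    · have h9 := mul_lt_mul_of_pos_left hu (mul_pos (hpp u) (hpp u))
      nlinarith [h9]
  linarith [key, hD]
end

section
/- Let p ≥ 1 and fix t ∈ ℝ^p. Let (Ω, ℱ, P) be a probability space, let A_N : Ω → ℝ^p be random vectors, let C_N : Ω → E_N be random elements of measurable spaces E_N, and let f_N : E_N → ℝ^p be measurable functions. Suppose that, for some complex numbers a and b, the conditional expectations E[exp(i⟨t, A_N⟩) | σ(C_N)] converge to the constant a in probability as N → ∞, and E[exp(i⟨t, f_N(C_N)⟩)] → b. Then E[exp(i⟨t, A_N + f_N(C_N)⟩)] → a·b as N → ∞. -/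
/-!
Pulling the `σ(C_N)`-measurable factor `exp(i⟨t, f_N(C_N)⟩)` out of the conditional expectation
writes the characteristic function of `A_N + f_N(C_N)` as `E[exp(i⟨t, f_N(C_N)⟩) Y_N]` with
`Y_N = E[exp(i⟨t, A_N⟩) | σ(C_N)]`. Since `‖Y_N‖ ≤ 1`, convergence of `Y_N` to `a` in probability
upgrades to `L¹` convergence by dominated convergence along a.e. convergent subsequences, so this
expectation is asymptotically `a · E[exp(i⟨t, f_N(C_N)⟩)] → a · b`.
-/

open MeasureTheory Filter Topology

namespace MeasureTheory

variable {Ω : Type*} {m m0 : MeasurableSpace Ω} {μ : Measure Ω}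

theorem integral_mul_condExp_of_stronglyMeasurable_left {𝕜 : Type*} [RCLike 𝕜] (hm : m ≤ m0)
    [SigmaFinite (μ.trim hm)] {g X : Ω → 𝕜} (hg : StronglyMeasurable[m] g)
    (hgX : Integrable (fun ω => g ω * X ω) μ) (hX : Integrable X μ) :
    ∫ ω, g ω * X ω ∂μ = ∫ ω, g ω * μ[X | m] ω ∂μ :=
  calc ∫ ω, g ω * X ω ∂μ = ∫ ω, μ[fun ω => g ω * X ω | m] ω ∂μ := (integral_condExp hm).symm
    _ = ∫ ω, g ω * μ[X | m] ω ∂μ := integral_congr_ae <|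
      condExp_bilin_of_stronglyMeasurable_left (ContinuousLinearMap.mul ℝ 𝕜) hg hgX hX

theorem tendsto_integral_norm_sub_of_tendstoInMeasure {E : Type*} [NormedAddCommGroup E]
    [IsFiniteMeasure μ] {f : ℕ → Ω → E} {g : Ω → E} {C : ℝ}
    (hfm : ∀ n, AEStronglyMeasurable (f n) μ) (hfC : ∀ n, ∀ᵐ ω ∂μ, ‖f n ω‖ ≤ C)
    (hg : Integrable g μ) (hfg : TendstoInMeasure μ f atTop g) :
    Tendsto (fun n => ∫ ω, ‖f n ω - g ω‖ ∂μ) atTop (𝓝 0) := by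
  refine tendsto_of_subseq_tendsto fun ns hns => ?_
  obtain ⟨ms, -, hae⟩ := (hfg.comp hns).exists_seq_tendsto_ae
  refine ⟨ms, ?_⟩
  simpa using tendsto_integral_of_dominated_convergence (fun ω => C + ‖g ω‖)
    (fun n => ((hfm _).sub hg.aestronglyMeasurable).norm) ((integrable_const C).add hg.norm)
    (fun n => (hfC _).mono fun ω hω => by
      rw [Pi.sub_apply, norm_norm]; linarith [norm_sub_le (f (ns (ms n)) ω) (g ω)])
    (hae.mono fun ω hω => tendsto_iff_norm_sub_tendsto_zero.1 hω)

theorem tendsto_integral_mul_of_tendstoInMeasure_const {𝕜 : Type*} [RCLike 𝕜] [IsFiniteMeasure μ]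
    {g Y : ℕ → Ω → 𝕜} {a b : 𝕜} {K C : ℝ}
    (hgm : ∀ n, AEStronglyMeasurable (g n) μ) (hgK : ∀ n, ∀ᵐ ω ∂μ, ‖g n ω‖ ≤ K)
    (hYm : ∀ n, AEStronglyMeasurable (Y n) μ) (hYC : ∀ n, ∀ᵐ ω ∂μ, ‖Y n ω‖ ≤ C)
    (hY : TendstoInMeasure μ Y atTop fun _ => a)
    (hg : Tendsto (fun n => ∫ ω, g n ω ∂μ) atTop (𝓝 b)) :
    Tendsto (fun n => ∫ ω, g n ω * Y n ω ∂μ) atTop (𝓝 (a * b)) := by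
  have hYa n : Integrable (fun ω => Y n ω - a) μ :=
    (Integrable.of_bound (hYm n) C (hYC n)).sub (integrable_const a)
  have hgYa n : Integrable (fun ω => g n ω * (Y n ω - a)) μ := (hYa n).bdd_mul (hgm n) (hgK n)
  have hsplit n : ∫ ω, g n ω * Y n ω ∂μ = ∫ ω, g n ω * (Y n ω - a) ∂μ + a * ∫ ω, g n ω ∂μ := by
    rw [← integral_const_mul, ← integral_add (hgYa n)
      ((Integrable.of_bound (hgm n) K (hgK n)).const_mul a)]
    congr 1 with ω
    ring
  have hL1 := tendsto_integral_norm_sub_of_tendstoInMeasure hYm hYC (integrable_const a) hY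
  have herror : Tendsto (fun n => ∫ ω, g n ω * (Y n ω - a) ∂μ) atTop (𝓝 0) := by
    refine squeeze_zero_norm (fun n => ?_) (by simpa using hL1.const_mul K)
    calc ‖∫ ω, g n ω * (Y n ω - a) ∂μ‖ ≤ ∫ ω, ‖g n ω * (Y n ω - a)‖ ∂μ :=
          norm_integral_le_integral_norm _
      _ ≤ ∫ ω, K * ‖Y n ω - a‖ ∂μ := integral_mono_ae (hgYa n).norm ((hYa n).norm.const_mul K)
          ((hgK n).mono fun ω hω => by dsimp only; rw [norm_mul]; gcongr)
      _ = K * ∫ ω, ‖Y n ω - a‖ ∂μ := integral_const_mul K _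
  simpa [hsplit] using herror.add (hg.const_mul a)

end MeasureTheory

theorem stmt19_general (p : ℕ) (t : Fin p → ℝ)
    {Ω : Type*} [MeasurableSpace Ω] (μ : Measure Ω) [IsProbabilityMeasure μ]
    (A : ℕ → Ω → (Fin p → ℝ)) (hA : ∀ N, Measurable (A N))
    (E : ℕ → Type*) [∀ N, MeasurableSpace (E N)]
    (C : (N : ℕ) → Ω → E N) (hC : ∀ N, Measurable (C N))
    (fN : (N : ℕ) → E N → (Fin p → ℝ)) (hf : ∀ N, Measurable (fN N))
    (a b : ℂ)
    (ha : TendstoInMeasure μ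
      (fun N => μ[(fun ω => Complex.exp (Complex.I * ((∑ i, t i * A N ω i : ℝ) : ℂ))) |
          MeasurableSpace.comap (C N) inferInstance])
      atTop (fun _ => a))
    (hb : Tendsto
      (fun N => ∫ ω, Complex.exp (Complex.I * ((∑ i, t i * fN N (C N ω) i : ℝ) : ℂ)) ∂μ)
      atTop (𝓝 b)) :
    Tendsto
      (fun N => ∫ ω,
        Complex.exp (Complex.I * ((∑ i, t i * (A N ω i + fN N (C N ω) i) : ℝ) : ℂ)) ∂μ)
      atTop (𝓝 (a * b)) := by
  set φ : (Fin p → ℝ) → ℂ := fun x => Complex.exp (Complex.I * ((∑ i, t i * x i : ℝ) : ℂ))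
  have hφ : Continuous φ := by fun_prop
  have hφ1 x : ‖φ x‖ ≤ 1 := (Complex.norm_exp_I_mul_ofReal _).le
  have hφA N : Integrable (fun ω => φ (A N ω)) μ :=
    .of_bound (hφ.measurable.comp (hA N)).aestronglyMeasurable 1 (ae_of_all _ fun _ => hφ1 _)
  have hφf N : StronglyMeasurable[MeasurableSpace.comap (C N) inferInstance]
      (fun ω => φ (fN N (C N ω))) :=
    (hφ.measurable.comp ((hf N).comp (comap_measurable (C N)))).stronglyMeasurable
  have hfactor N ω : Complex.exp (Complex.I * ((∑ i, t i * (A N ω i + fN N (C N ω) i) : ℝ) : ℂ))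
      = φ (fN N (C N ω)) * φ (A N ω) := by
    simp only [φ, mul_add, Finset.sum_add_distrib, Complex.ofReal_add, Complex.exp_add]
    ring
  have hpull N := integral_mul_condExp_of_stronglyMeasurable_left (hC N).comap_le (hφf N)
    ((hφA N).bdd_mul ((hφf N).mono (hC N).comap_le).aestronglyMeasurable
      (ae_of_all _ fun _ => hφ1 _)) (hφA N)
  simp_rw [hfactor, hpull]
  exact tendsto_integral_mul_of_tendstoInMeasure_const
    (fun N => ((hφf N).mono (hC N).comap_le).aestronglyMeasurable)
    (fun N => ae_of_all _ fun _ => hφ1 _)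
    (fun N => (stronglyMeasurable_condExp.mono (hC N).comap_le).aestronglyMeasurable)
    (fun N => ae_bdd_norm_condExp_of_ae_bdd_norm (ae_of_all _ fun _ => hφ1 _)) ha hb

/-- if the conditional characteristic functions
`E[exp(i⟨t, A_N⟩) | σ(C_N)]` converge in probability to a constant `a`, and the
characteristic functions `E[exp(i⟨t, f_N(C_N)⟩)]` converge to `b`, then
`E[exp(i⟨t, A_N + f_N(C_N)⟩)] → a·b`. (Lemma C.2 of the paper.) -/
theorem stmt19 (p : ℕ) (hp : 1 ≤ p) (t : Fin p → ℝ)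
    {Ω : Type*} [MeasurableSpace Ω] (μ : Measure Ω) [IsProbabilityMeasure μ]
    (A : ℕ → Ω → (Fin p → ℝ)) (hA : ∀ N, Measurable (A N))
    (E : ℕ → Type*) [∀ N, MeasurableSpace (E N)]
    (C : (N : ℕ) → Ω → E N) (hC : ∀ N, Measurable (C N))
    (fN : (N : ℕ) → E N → (Fin p → ℝ)) (hf : ∀ N, Measurable (fN N))
    (a b : ℂ)
    (ha : TendstoInMeasure μ
      (fun N => μ[(fun ω => Complex.exp (Complex.I * ((∑ i, t i * A N ω i : ℝ) : ℂ))) |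
          MeasurableSpace.comap (C N) inferInstance])
      atTop (fun _ => a))
    (hb : Tendsto
      (fun N => ∫ ω, Complex.exp (Complex.I * ((∑ i, t i * fN N (C N ω) i : ℝ) : ℂ)) ∂μ)
      atTop (𝓝 b)) :
    Tendsto
      (fun N => ∫ ω,
        Complex.exp (Complex.I * ((∑ i, t i * (A N ω i + fN N (C N ω) i) : ℝ) : ℂ)) ∂μ)
      atTop (𝓝 (a * b)) :=
  stmt19_general p t μ A hA E C hC fN hf a b ha hb
end
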